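/- For every ε > 0 there exists a constant C = C(ε) such that the following holds for every n, every 3-uniform hypergraph H on n vertices, and every matching M of maximum size in H: the number of vertices v ∈ V(H) \ V(M) for which there are at least εn² pairs {E,F} of distinct edges of M such that L_v(EF) is isomorphic to B_{023} or to B_{033} is at most C. -/

import Mathlib

open Finset

/-- The bipartite graph `B₀₂₃` on vertex classes `Fin 3` and `Fin 3`, with edge set
`{x₁y₀, x₁y₁, x₂y₀, x₂y₁, x₂y₂}` (degree sequences `0,2,3` and `2,2,1`). -/
def B023 : Finset (Fin 3 × Fin 3) :=
  Finset.univ.filter fun p => p.1 = 2 ∨ (p.1 = 1 ∧ p.2 ≠ 2)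

/-- The bipartite graph `B₀₃₃` on vertex classes `Fin 3` and `Fin 3`: the two vertices
`≠ 0` of the first class are joined to all of the second class (degree sequences `0,3,3`
and `2,2,2`). -/
def B033 : Finset (Fin 3 × Fin 3) := Finset.univ.filter fun p => p.1 ≠ 0

/-- The link graph `L_v(EF)` of `v` (the bipartite graph on classes `E` and `F` in which
`a ∈ E` is joined to `b ∈ F` iff `{v,a,b} ∈ H`) is isomorphic to the bipartite graph with
edge set `B` on `Fin 3` and `Fin 3`. -/
def LinkIso {Vt : Type*} [DecidableEq Vt] (H : Finset (Finset Vt)) (v : Vt)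
    (E F : Finset Vt) (B : Finset (Fin 3 × Fin 3)) : Prop :=
  ∃ (g : Vt → Fin 3) (h : Vt → Fin 3),
    Set.BijOn g ↑E Set.univ ∧ Set.BijOn h ↑F Set.univ ∧
    ∀ a ∈ E, ∀ b ∈ F, (({v, a, b} : Finset Vt) ∈ H ↔ (g a, h b) ∈ B)

/-!
A link isomorphic to `B₀₂₃` or `B₀₃₃` has a vertex of `E` joined to all of `F` and a second
vertex of `E` with two neighbours in `F`. Call a pair `(E, F)` of edges of `M` rich if at least six
uncovered vertices have such a link on it. If two edges `F, F'` had three common rich partners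
`E₁, E₂, E₃`, one could pick six distinct uncovered vertices, one for each pair `(Eᵢ, F)`,
`(Eᵢ, F')`, and complete each to an edge by a vertex of `Eᵢ` and one of `F` resp. `F'` so that
the six edges are disjoint: five edges of `M` would be traded for six. So the rich pairs form a `K₃,₂`-free relation on the `m ≤ n / 3`
edges of `M`, and Cauchy–Schwarz bounds their number by `√3 m^{3/2} ≤ n^{3/2} / 3`. On the other
hand, if `k` uncovered vertices each see `εn²` good pairs, the pairs that are not rich account
for at most `6m² ≤ n²` of the `kεn²` incidences, so for `εk > 2` at least `εn² / 2` pairs are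
rich. Together these force `ε²n < 1`, impossible for `k > 2/ε + 1/ε²` as `k ≤ n`.
-/

open Function

variable {α : Type*}

theorem Finset.exists_mem_ne_ne [DecidableEq α] {s : Finset α} (hs : 2 < s.card) (p q : α) :
    ∃ r ∈ s, r ≠ p ∧ r ≠ q := by
  obtain ⟨r, hr⟩ : ((s.erase p).erase q).Nonempty := by
    rw [← Finset.card_pos]
    have := Finset.pred_card_le_card_erase (s := s.erase p) (a := q)
    have := Finset.pred_card_le_card_erase (s := s) (a := p)
    omega
  simp only [Finset.mem_erase] at hr
  exact ⟨r, hr.2.2, hr.2.1, hr.1⟩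

theorem Finset.exists_fin_injective_of_card_eq {s : Finset α} {n : ℕ} (h : s.card = n) :
    ∃ f : Fin n → α, Injective f ∧ ∀ i, f i ∈ s :=
  ⟨fun i => (s.equivFinOfCardEq h).symm i, Subtype.val_injective.comp (Equiv.injective _),
    fun _ => Finset.coe_mem _⟩

theorem Finset.exists_injective_of_card_le [DecidableEq α] {ι : Type*} [Fintype ι]
    (t : ι → Finset α) (ht : ∀ i, Fintype.card ι ≤ (t i).card) : ∃ f : ι → α, Injective f ∧ ∀ i, f i ∈ t i := by
  refine (Finset.all_card_le_biUnion_card_iff_exists_injective t).mp fun s => ?_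
  rcases s.eq_empty_or_nonempty with rfl | ⟨i, hi⟩
  · simp
  · calc s.card ≤ Fintype.card ι := Finset.card_le_univ s
      _ ≤ (t i).card := ht i
      _ ≤ (s.biUnion t).card := Finset.card_le_card (Finset.subset_biUnion_of_mem t hi)

theorem Function.injective_of_mem_of_injOn_fibers {ι β : Type*} {f : ι → β}
    {E : β → Finset α} (hE : Pairwise (Disjoint on E)) {a : ι → α} (ha : ∀ i, a i ∈ E (f i))
    (hfib : ∀ i j, f i = f j → a i = a j → i = j) : Injective a := by
  intro i j hij
  by_cases hf : f i = f j
  · exact hfib i j hf hij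
  · exact absurd (hij ▸ ha j) (Finset.disjoint_left.mp (hE hf) (ha i))

theorem Finset.sum_le_card_filter_mul_add {ι : Type*} (s : Finset ι) (f : ι → ℕ) {B : ℕ}
    (hB : ∀ i ∈ s, f i ≤ B) (k : ℕ) :
    ∑ i ∈ s, f i ≤ (s.filter fun i => k ≤ f i).card * B + k * s.card := by
  calc ∑ i ∈ s, f i ≤ ∑ i ∈ s, ((if k ≤ f i then B else 0) + k) := by
        refine Finset.sum_le_sum fun i hi => ?_
        split_ifs with h
        · exact (hB i hi).trans (Nat.le_add_right _ _)
        · omega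
    _ = (s.filter fun i => k ≤ f i).card * B + k * s.card := by
        rw [Finset.sum_add_distrib, ← Finset.sum_filter, Finset.sum_const, Finset.sum_const,
          smul_eq_mul, smul_eq_mul, mul_comm k]

theorem Finset.card_sq_le_of_codegree_le [DecidableEq α] {β : Type*} [DecidableEq β] (X : Finset α)
    (Y : Finset β) (A : Finset (α × β)) (hA : A ⊆ X ×ˢ Y) (t : ℕ)
    (ht : ∀ y ∈ Y, ∀ y' ∈ Y, y ≠ y' → (X.filter fun x => (x, y) ∈ A ∧ (x, y') ∈ A).card ≤ t) :
    A.card ^ 2 ≤ X.card * (A.card + t * Y.card ^ 2) := by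
  set d : α → ℕ := fun x => (Y.filter fun y => (x, y) ∈ A).card
  set c : β → β → ℕ := fun y y' => (X.filter fun x => (x, y) ∈ A ∧ (x, y') ∈ A).card
  have hA_sum : A.card = ∑ x ∈ X, ∑ y ∈ Y, if (x, y) ∈ A then 1 else 0 := by
    rw [← Finset.sum_product', ← Finset.card_filter, Finset.filter_mem_eq_inter,
      Finset.inter_eq_right.mpr hA]
  have hsq : ∑ x ∈ X, d x ^ 2 = ∑ y ∈ Y, ∑ y' ∈ Y, c y y' := by
    simp only [d, c, Finset.card_filter, sq, Finset.sum_mul_sum, ite_zero_mul_ite_zero, mul_one]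
    rw [Finset.sum_comm]
    exact Finset.sum_congr rfl fun y _ => Finset.sum_comm
  have hdiag : ∑ y ∈ Y, c y y = A.card := by
    simp only [c, and_self, Finset.card_filter]
    rw [hA_sum, Finset.sum_comm]
  have hrow : ∀ y ∈ Y, ∑ y' ∈ Y, c y y' ≤ c y y + t * Y.card := by
    intro y hy
    rw [← Finset.add_sum_erase Y _ hy]
    gcongr
    calc ∑ y' ∈ Y.erase y, c y y' ≤ ∑ _y' ∈ Y.erase y, t :=
          Finset.sum_le_sum fun y' hy' =>
            ht y hy y' (Finset.mem_of_mem_erase hy') (Finset.ne_of_mem_erase hy').symm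
      _ ≤ t * Y.card := by
          rw [Finset.sum_const, smul_eq_mul, mul_comm]
          exact Nat.mul_le_mul_left _ Finset.card_erase_le
  calc A.card ^ 2 = (∑ x ∈ X, d x) ^ 2 := by
        simp only [d, Finset.card_filter, hA_sum]
    _ ≤ X.card * ∑ x ∈ X, d x ^ 2 := sq_sum_le_card_mul_sum_sq
    _ ≤ X.card * (A.card + t * Y.card ^ 2) := by
        rw [hsq]
        gcongr
        calc ∑ y ∈ Y, ∑ y' ∈ Y, c y y' ≤ ∑ y ∈ Y, (c y y + t * Y.card) := Finset.sum_le_sum hrow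
          _ = A.card + t * Y.card ^ 2 := by
            rw [Finset.sum_add_distrib, hdiag, Finset.sum_const, smul_eq_mul]
            ring

theorem ncard_pairs_le_card_filter_offDiag {β : Type*} [DecidableEq β] (M : Finset β)
    (r : β → β → Prop) [DecidableRel r] :
    {S : Finset β | S ⊆ M ∧ S.card = 2 ∧ ∃ E ∈ S, ∃ F ∈ S, E ≠ F ∧ r E F}.ncard ≤
      (M.offDiag.filter fun p => r p.1 p.2).card := by
  refine (Set.ncard_le_ncard (t := ↑((M.offDiag.filter fun p => r p.1 p.2).image
    fun p => ({p.1, p.2} : Finset β))) ?_ (Finset.finite_toSet _)).trans ?_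
  · rintro S ⟨hSM, hS2, E, hE, F, hF, hEF, hr⟩
    refine Finset.mem_image.mpr ⟨(E, F), Finset.mem_filter.mpr
      ⟨Finset.mem_offDiag.mpr ⟨hSM hE, hSM hF, hEF⟩, hr⟩, ?_⟩
    refine (Finset.eq_of_subset_of_card_le (Finset.insert_subset hE
      (Finset.singleton_subset_iff.mpr hF)) ?_)
    rw [hS2, Finset.card_pair hEF]
  · rw [Set.ncard_coe_finset]
    exact Finset.card_image_le

theorem mul_card_le_card_of_pairwiseDisjoint [DecidableEq α] [Fintype α]
    {M : Finset (Finset α)} (hM : (M : Set (Finset α)).PairwiseDisjoint id) {k : ℕ}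
    (hk : ∀ e ∈ M, e.card = k) : k * M.card ≤ Fintype.card α := by
  calc k * M.card = (M.biUnion id).card := by
        rw [mul_comm, Finset.card_biUnion hM]
        exact (Finset.sum_const_nat hk).symm
    _ ≤ Fintype.card α := Finset.card_le_univ _

theorem le_two_div_add_one_div_sq {ε k n m a : ℝ} (hε : 0 < ε) (hm : 0 ≤ m) (hmn : 3 * m ≤ n)
    (hkn : k ≤ n) (ha : a ≤ m ^ 2) (hcount : k * (ε * n ^ 2) ≤ a * k + 6 * m ^ 2)
    (hsq : a ^ 2 ≤ m * (a + 2 * m ^ 2)) : k ≤ 2 / ε + 1 / ε ^ 2 := by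
  by_contra! hk
  have hεk : 2 < ε * k :=
    (div_lt_iff₀' hε).mp ((le_add_of_nonneg_right (by positivity)).trans_lt hk)
  have hεn : 1 < ε ^ 2 * n :=
    (div_lt_iff₀' (by positivity)).mp ((le_add_of_nonneg_left (by positivity)).trans_lt
      (hk.trans_le hkn))
  have hk0 : 0 < k := by nlinarith
  have hn0 : 0 < n := by linarith
  have ha_large : ε * n ^ 2 / 2 < a := by
    have : k * (ε * n ^ 2 / 2) < a * k := by nlinarith
    nlinarith
  have ha_small : 9 * a ^ 2 ≤ n ^ 3 := by
    have h1 : a ^ 2 ≤ 3 * m ^ 3 := by nlinarith [mul_le_mul_of_nonneg_left ha hm]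
    have h2 : (3 * m) ^ 3 ≤ n ^ 3 := pow_le_pow_left₀ (by positivity) hmn 3
    nlinarith
  have hsq_large : (ε * n ^ 2 / 2) ^ 2 < a ^ 2 :=
    pow_lt_pow_left₀ ha_large (by positivity) two_ne_zero
  have hn3 : n ^ 3 < ε ^ 2 * n ^ 4 := by nlinarith [mul_lt_mul_of_pos_right hεn (pow_pos hn0 3)]
  nlinarith [pow_pos hn0 4, sq_nonneg ε]

section

variable [DecidableEq α]

-- The two features of `B₀₂₃` and `B₀₃₃` that the augmentation needs: a vertex of `E` joined to
-- all of `F`, and, besides any prescribed vertex `x`, a vertex of `E` with two neighbours in `F`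
-- (stated as: with a neighbour other than any prescribed `y`).
def HasRichLink (H : Finset (Finset α)) (v : α) (E F : Finset α) : Prop :=
  (∃ d ∈ E, ∀ y ∈ F, ({v, d, y} : Finset α) ∈ H) ∧
    ∀ x, ∃ a ∈ E, a ≠ x ∧ ∀ y, ∃ z ∈ F, z ≠ y ∧ ({v, a, z} : Finset α) ∈ H

theorem LinkIso.hasRichLink {H : Finset (Finset α)} {v : α} {E F : Finset α}
    {B : Finset (Fin 3 × Fin 3)} (hB : ∃ i j, i ≠ j ∧ (∀ k, (i, k) ∈ B) ∧
      ∃ k l, k ≠ l ∧ (j, k) ∈ B ∧ (j, l) ∈ B)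
    (hlink : LinkIso H v E F B) : HasRichLink H v E F := by
  obtain ⟨i, j, hij, hi, k, l, hkl, hjk, hjl⟩ := hB
  obtain ⟨g, h, hg, hh, hH⟩ := hlink
  obtain ⟨d, hdE, rfl⟩ := hg.surjOn (Set.mem_univ i)
  obtain ⟨s, hsE, rfl⟩ := hg.surjOn (Set.mem_univ j)
  obtain ⟨z, hzF, rfl⟩ := hh.surjOn (Set.mem_univ k)
  obtain ⟨z', hz'F, rfl⟩ := hh.surjOn (Set.mem_univ l)
  have hzz' : z ≠ z' := fun h => hkl (congrArg _ h)
  have avoid : ∀ a ∈ E, (g a, h z) ∈ B → (g a, h z') ∈ B →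
      ∀ y, ∃ w ∈ F, w ≠ y ∧ ({v, a, w} : Finset α) ∈ H := by
    intro a ha hz hz' y
    by_cases hzy : z = y
    · exact ⟨z', hz'F, hzy ▸ hzz'.symm, (hH a ha z' hz'F).2 hz'⟩
    · exact ⟨z, hzF, hzy, (hH a ha z hzF).2 hz⟩
  refine ⟨⟨d, hdE, fun y hy => (hH d hdE y hy).2 (hi _)⟩, fun x => ?_⟩
  by_cases hdx : d = x
  · exact ⟨s, hsE, fun hsx => hij (by rw [hdx, ← hsx]), avoid s hsE hjk hjl⟩
  · exact ⟨d, hdE, hdx, avoid d hdE (hi _) (hi _)⟩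

theorem hasRichLink_of_linkIso {H : Finset (Finset α)} {v : α} {E F : Finset α}
    (h : LinkIso H v E F B023 ∨ LinkIso H v E F B033) : HasRichLink H v E F := by
  rcases h with h | h
  · exact h.hasRichLink ⟨2, 1, by decide, by decide, 0, 1, by decide, by decide, by decide⟩
  · exact h.hasRichLink ⟨1, 2, by decide, by decide, 0, 1, by decide, by decide, by decide⟩

theorem exists_grid_of_hasRichLink {H : Finset (Finset α)} {E : Fin 3 → Finset α}
    {F : Fin 2 → Finset α} (hF : ∀ j, 2 < (F j).card) (v : Fin 3 × Fin 2 → α)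
    (hv : ∀ p, HasRichLink H (v p) (E p.1) (F p.2)) :
    ∃ a y : Fin 3 × Fin 2 → α, (∀ p q, p.1 = q.1 → a p = a q → p = q) ∧
      (∀ p q, p.2 = q.2 → y p = y q → p = q) ∧ (∀ p, a p ∈ E p.1) ∧ (∀ p, y p ∈ F p.2) ∧
      ∀ p, ({v p, a p, y p} : Finset α) ∈ H := by
  -- Rows `0, 1, 2` use a vertex joined to all of `F` in columns `0, 1, 0` respectively, so each
  -- column meets at most two vertices with only two neighbours and its `y`s can be kept distinct.
  obtain ⟨d00, hd00, e00⟩ := (hv (0, 0)).1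
  obtain ⟨a01, ha01, ha01d, f01⟩ := (hv (0, 1)).2 d00
  obtain ⟨d11, hd11, e11⟩ := (hv (1, 1)).1
  obtain ⟨a10, ha10, ha10d, f10⟩ := (hv (1, 0)).2 d11
  obtain ⟨d20, hd20, e20⟩ := (hv (2, 0)).1
  obtain ⟨a21, ha21, ha21d, f21⟩ := (hv (2, 1)).2 d20
  obtain ⟨y10, hy10, -, e10⟩ := f10 a10
  obtain ⟨y00, hy00, hy00', -⟩ := Finset.exists_mem_ne_ne (hF 0) y10 y10
  obtain ⟨y20, hy20, hy20', hy20''⟩ := Finset.exists_mem_ne_ne (hF 0) y10 y00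
  obtain ⟨y01, hy01, -, e01⟩ := f01 a01
  obtain ⟨y21, hy21, hy21', e21⟩ := f21 y01
  obtain ⟨y11, hy11, hy11', hy11''⟩ := Finset.exists_mem_ne_ne (hF 1) y01 y21
  refine ⟨fun p => ![![d00, a01], ![a10, d11], ![d20, a21]] p.1 p.2,
    fun p => ![![y00, y01], ![y10, y11], ![y20, y21]] p.1 p.2, ?_, ?_, ?_, ?_, ?_⟩
  · rintro ⟨i, j⟩ ⟨i', j'⟩ (rfl : i = i')
    fin_cases i <;> fin_cases j <;> fin_cases j' <;> simp_all [eq_comm]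
  · rintro ⟨i, j⟩ ⟨i', j'⟩ (rfl : j = j')
    fin_cases j <;> fin_cases i <;> fin_cases i' <;> simp_all [eq_comm]
  · rintro ⟨i, j⟩
    fin_cases i <;> fin_cases j <;> assumption
  · rintro ⟨i, j⟩
    fin_cases i <;> fin_cases j <;> assumption
  · rintro ⟨i, j⟩
    fin_cases i <;> fin_cases j
    exacts [e00 _ hy00, e01, e10, e11 _ hy11, e20 _ hy20, e21]

theorem pairwise_disjoint_triples {ι : Type*} {v a y : ι → α} (hv : Injective v)
    (ha : Injective a) (hy : Injective y) (hva : ∀ i j, v i ≠ a j)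
    (hvy : ∀ i j, v i ≠ y j) (hay : ∀ i j, a i ≠ y j) :
    Pairwise (Disjoint on fun i => ({v i, a i, y i} : Finset α)) := by
  intro i j hij
  simp only [onFun, Finset.disjoint_insert_left, Finset.disjoint_insert_right,
    Finset.disjoint_singleton, Finset.mem_insert, Finset.mem_singleton, not_or]
  exact ⟨⟨hv.ne hij.symm, hva j i, hvy j i⟩, ⟨(hva i j).symm, ha.ne hij.symm, hay j i⟩,
    hvy i j, hay i j, hy.ne hij⟩

theorem exists_larger_matching_of_triples {H M S : Finset (Finset α)} (hMH : M ⊆ H)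
    (hM : (M : Set (Finset α)).PairwiseDisjoint id) (hSM : S ⊆ M) {ι : Type*} [Fintype ι]
    (hS : S.card < Fintype.card ι) {v a y : ι → α} (hv : Injective v)
    (ha : Injective a) (hy : Injective y) (hvM : ∀ i, v i ∉ M.biUnion id)
    (haS : ∀ i, a i ∈ S.biUnion id) (hyS : ∀ i, y i ∈ S.biUnion id) (hay : ∀ i j, a i ≠ y j)
    (hH : ∀ i, ({v i, a i, y i} : Finset α) ∈ H) :
    ∃ M' ⊆ H, (M' : Set (Finset α)).PairwiseDisjoint id ∧ M.card < M'.card := by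
  set T : ι → Finset α := fun i => {v i, a i, y i}
  have hcov : ∀ {x}, x ∈ S.biUnion id → x ∈ M.biUnion id :=
    fun hx => Finset.biUnion_subset_biUnion_of_subset_left _ hSM hx
  have hT : Pairwise (Disjoint on T) := pairwise_disjoint_triples hv ha hy
    (fun i j h => hvM i (h ▸ hcov (haS j))) (fun i j h => hvM i (h ▸ hcov (hyS j))) hay
  have hTinj : Injective T := by
    intro i j h
    by_contra hij
    have hdisj : Disjoint (T i) (T j) := hT hij
    rw [h, disjoint_self] at hdisj
    exact Finset.insert_ne_empty _ _ hdisj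
  have hGT : ∀ G ∈ M \ S, ∀ i, Disjoint G (T i) := by
    intro G hG i
    obtain ⟨hGM, hGS⟩ := Finset.mem_sdiff.mp hG
    have hS_avoid : ∀ {x}, x ∈ S.biUnion id → x ∉ G := by
      intro x hx hxG
      obtain ⟨G', hG'S, hxG'⟩ := Finset.mem_biUnion.mp hx
      exact Finset.disjoint_left.mp (hM hGM (hSM hG'S) (by rintro rfl; exact hGS hG'S)) hxG hxG'
    simp only [T, Finset.disjoint_insert_right, Finset.disjoint_singleton_right]
    exact ⟨fun h => hvM i (Finset.mem_biUnion.mpr ⟨G, hGM, h⟩), hS_avoid (haS i),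
      hS_avoid (hyS i)⟩
  have hdisj : Disjoint (M \ S) (Finset.univ.image T) := by
    refine Finset.disjoint_right.mpr ?_
    rintro _ hT' hTM
    obtain ⟨i, -, rfl⟩ := Finset.mem_image.mp hT'
    exact Finset.insert_ne_empty _ _ (disjoint_self.mp (hGT _ hTM i))
  refine ⟨(M \ S) ∪ Finset.univ.image T, ?_, ?_, ?_⟩
  · refine Finset.union_subset (Finset.sdiff_subset.trans hMH) ?_
    rintro _ hT'
    obtain ⟨i, -, rfl⟩ := Finset.mem_image.mp hT'
    exact hH i
  · rw [Finset.coe_union]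
    refine (hM.subset (Finset.coe_subset.mpr Finset.sdiff_subset)).union ?_ ?_
    · rintro _ hTi _ hTj hne
      obtain ⟨i, -, rfl⟩ := Finset.mem_image.mp (Finset.mem_coe.mp hTi)
      obtain ⟨j, -, rfl⟩ := Finset.mem_image.mp (Finset.mem_coe.mp hTj)
      exact hT fun h => hne (h ▸ rfl)
    · rintro G hG _ hTi -
      obtain ⟨i, -, rfl⟩ := Finset.mem_image.mp (Finset.mem_coe.mp hTi)
      exact hGT G hG i
  · rw [Finset.card_union_of_disjoint hdisj, Finset.card_sdiff_of_subset hSM,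
      Finset.card_image_of_injective _ hTinj, Finset.card_univ]
    have := Finset.card_le_card hSM
    omega

open Classical in
noncomputable def richPairs (H M : Finset (Finset α)) (K : Finset α) :
    Finset (Finset α × Finset α) :=
  M.offDiag.filter fun p => 6 ≤ (K.filter fun v => HasRichLink H v p.1 p.2).card

open Classical in
theorem mem_richPairs {H M : Finset (Finset α)} {K : Finset α} {p : Finset α × Finset α} :
    p ∈ richPairs H M K ↔ (p.1 ∈ M ∧ p.2 ∈ M ∧ p.1 ≠ p.2) ∧
      6 ≤ (K.filter fun v => HasRichLink H v p.1 p.2).card := by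
  rw [richPairs, Finset.mem_filter, Finset.mem_offDiag]

open Classical in
theorem card_filter_mem_richPairs_le_two {H M : Finset (Finset α)} (h3 : ∀ e ∈ H, e.card = 3)
    (hMH : M ⊆ H) (hM : (M : Set (Finset α)).PairwiseDisjoint id)
    (hmax : ∀ M' ⊆ H, (M' : Set (Finset α)).PairwiseDisjoint id → M'.card ≤ M.card)
    {K : Finset α} (hK : ∀ v ∈ K, v ∉ M.biUnion id) {F F' : Finset α} (hFF' : F ≠ F') :
    (M.filter fun E => (E, F) ∈ richPairs H M K ∧ (E, F') ∈ richPairs H M K).card ≤ 2 := by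
  by_contra! hcommon
  obtain ⟨T, hT, hT3⟩ := Finset.exists_subset_card_eq (Nat.succ_le_of_lt hcommon)
  obtain ⟨E, hEinj, hET⟩ := Finset.exists_fin_injective_of_card_eq hT3
  obtain ⟨G, hGinj, hGF⟩ := Finset.exists_fin_injective_of_card_eq (Finset.card_pair hFF')
  have hrich : ∀ i j, (E i, G j) ∈ richPairs H M K := by
    intro i j
    obtain ⟨-, hEF, hEF'⟩ := Finset.mem_filter.mp (hT (hET i))
    have hG : G j = F ∨ G j = F' := by simpa using hGF j
    rcases hG with h | h <;> rw [h] <;> assumption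
  have hmem := fun i j => mem_richPairs.mp (hrich i j)
  obtain ⟨-, hEF, hEF'⟩ := Finset.mem_filter.mp (hT (hET 0))
  have hEM : ∀ i, E i ∈ M := fun i => (hmem i 0).1.1
  have hGM : ∀ j, G j ∈ M := fun j => (hmem 0 j).1.2.1
  obtain ⟨v, hvinj, hvK⟩ := Finset.exists_injective_of_card_le
    (fun p : Fin 3 × Fin 2 => K.filter fun v => HasRichLink H v (E p.1) (G p.2))
    fun p => (hmem p.1 p.2).2
  obtain ⟨a, y, ha_row, hy_col, haE, hyG, hH⟩ := exists_grid_of_hasRichLink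
    (fun j => by rw [h3 _ (hMH (hGM j))]; norm_num) v
    fun p => (Finset.mem_filter.mp (hvK p)).2
  set S := T ∪ {F, F'}
  have hS : S.card < Fintype.card (Fin 3 × Fin 2) :=
    calc S.card ≤ T.card + ({F, F'} : Finset (Finset α)).card := Finset.card_union_le _ _
      _ < Fintype.card (Fin 3 × Fin 2) := by rw [hT3, Finset.card_pair hFF']; decide
  have hEdisj : Pairwise (Disjoint on E) := fun i j hij => hM (hEM i) (hEM j) (hEinj.ne hij)
  have hGdisj : Pairwise (Disjoint on G) := fun i j hij => hM (hGM i) (hGM j) (hGinj.ne hij)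
  obtain ⟨M', hM'H, hM', hlt⟩ := exists_larger_matching_of_triples hMH hM
    (Finset.union_subset (hT.trans (Finset.filter_subset _ _))
      (Finset.insert_subset (mem_richPairs.mp hEF).1.2.1
        (Finset.singleton_subset_iff.mpr (mem_richPairs.mp hEF').1.2.1))) hS hvinj
    (Function.injective_of_mem_of_injOn_fibers hEdisj haE ha_row)
    (Function.injective_of_mem_of_injOn_fibers hGdisj hyG hy_col)
    (fun p => hK _ (Finset.mem_filter.mp (hvK p)).1)
    (fun p => Finset.mem_biUnion.mpr ⟨E p.1, Finset.mem_union_left _ (hET _), haE p⟩)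
    (fun p => Finset.mem_biUnion.mpr ⟨G p.2, Finset.mem_union_right _ (hGF _), hyG p⟩)
    (fun p q h => Finset.disjoint_left.mp
      (hM (hEM p.1) (hGM q.2) (hmem p.1 q.2).1.2.2) (haE p) (h ▸ hyG q))
    hH
  exact (hmax M' hM'H hM').not_gt hlt

open Classical in
theorem card_le_of_le_card_hasRichLink [Fintype α] {ε : ℝ} (hε : 0 < ε)
    {H M : Finset (Finset α)} (h3 : ∀ e ∈ H, e.card = 3) (hMH : M ⊆ H)
    (hM : (M : Set (Finset α)).PairwiseDisjoint id)
    (hmax : ∀ M' ⊆ H, (M' : Set (Finset α)).PairwiseDisjoint id → M'.card ≤ M.card)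
    {K : Finset α} (hK : ∀ v ∈ K, v ∉ M.biUnion id)
    (hKrich : ∀ v ∈ K, ε * (Fintype.card α : ℝ) ^ 2 ≤
      (M.offDiag.filter fun p => HasRichLink H v p.1 p.2).card) :
    (K.card : ℝ) ≤ 2 / ε + 1 / ε ^ 2 := by
  set A := richPairs H M K
  set count : Finset α × Finset α → ℕ := fun p => (K.filter fun v => HasRichLink H v p.1 p.2).card
  have hAM : A ⊆ M ×ˢ M := fun p hp =>
    Finset.mem_product.mpr ⟨(mem_richPairs.mp hp).1.1, (mem_richPairs.mp hp).1.2.1⟩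
  have hoff : M.offDiag.card ≤ M.card ^ 2 := by
    rw [Finset.offDiag_card, sq]
    exact Nat.sub_le _ _
  have hdouble : (K.card : ℝ) * (ε * (Fintype.card α : ℝ) ^ 2) ≤ ∑ p ∈ M.offDiag, count p := by
    have := Finset.sum_card_bipartiteAbove_eq_sum_card_bipartiteBelow
      (fun v p => HasRichLink H v p.1 p.2) (s := K) (t := M.offDiag)
    calc (K.card : ℝ) * (ε * (Fintype.card α : ℝ) ^ 2)
        ≤ ∑ v ∈ K, ((M.offDiag.filter fun p => HasRichLink H v p.1 p.2).card : ℝ) := by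
          rw [← nsmul_eq_mul, ← Finset.sum_const]
          exact Finset.sum_le_sum hKrich
      _ = ∑ p ∈ M.offDiag, count p := by exact_mod_cast this
  have hsplit : ∑ p ∈ M.offDiag, count p ≤ A.card * K.card + 6 * M.card ^ 2 :=
    (Finset.sum_le_card_filter_mul_add _ count (fun p _ => Finset.card_filter_le _ _) 6).trans
      (Nat.add_le_add_left (Nat.mul_le_mul_left 6 hoff) _)
  have hKST : A.card ^ 2 ≤ M.card * (A.card + 2 * M.card ^ 2) :=
    Finset.card_sq_le_of_codegree_le M M A hAM 2 fun F _ F' _ hFF' =>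
      card_filter_mem_richPairs_le_two h3 hMH hM hmax hK hFF'
  have hA : A.card ≤ M.card ^ 2 := (Finset.card_le_card (Finset.filter_subset _ _)).trans hoff
  refine le_two_div_add_one_div_sq (k := K.card) (n := Fintype.card α) (m := M.card)
    (a := A.card) hε (Nat.cast_nonneg _) ?_ (by exact_mod_cast Finset.card_le_univ K)
    (by exact_mod_cast hA) (hdouble.trans (by exact_mod_cast hsplit)) (by exact_mod_cast hKST)
  exact_mod_cast mul_card_le_card_of_pairwiseDisjoint hM fun e he => h3 e (hMH he)

end

/-- For every `ε > 0` there is a constant `C` such that for every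
3-uniform hypergraph `H` on `n` vertices and every maximum matching `M` in `H`, at most
`C` uncovered vertices `v` admit at least `εn²` unordered pairs `{E,F}` of distinct edges
of `M` whose link graph `L_v(EF)` is isomorphic to `B₀₂₃` or to `B₀₃₃`. -/
theorem stmt_13 (ε : ℝ) (hε : 0 < ε) :
    ∃ C : ℕ, ∀ (Vt : Type) [Fintype Vt] [DecidableEq Vt] (H : Finset (Finset Vt)),
      (∀ e ∈ H, e.card = 3) →
      ∀ M ⊆ H, (M : Set (Finset Vt)).PairwiseDisjoint id →
      (∀ M' ⊆ H, (M' : Set (Finset Vt)).PairwiseDisjoint id → M'.card ≤ M.card) →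
      {v : Vt | v ∉ M.biUnion id ∧
        ε * (Fintype.card Vt : ℝ)^2 ≤
          (({S : Finset (Finset Vt) | S ⊆ M ∧ S.card = 2 ∧
            ∃ E ∈ S, ∃ F ∈ S, E ≠ F ∧
              (LinkIso H v E F B023 ∨ LinkIso H v E F B033)}.ncard : ℝ))}.ncard ≤ C := by
  refine ⟨⌈2 / ε + 1 / ε ^ 2⌉₊, fun Vt _ _ H h3 M hMH hM hmax => ?_⟩
  classical
  rw [Set.ncard_eq_toFinset_card _ (Set.toFinite _)]
  refine Nat.cast_le.mp ((card_le_of_le_card_hasRichLink hε h3 hMH hM hmax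
    (fun v hv => ((Set.Finite.mem_toFinset _).mp hv).1) fun v hv => ?_).trans (Nat.le_ceil _))
  refine ((Set.Finite.mem_toFinset _).mp hv).2.trans ?_
  exact_mod_cast (ncard_pairs_le_card_filter_offDiag M _).trans
    (Finset.card_le_card (Finset.monotone_filter_right _ fun _ _ => hasRichLink_of_linkIso))
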